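/- Let φ̃ : (0,∞) → ℝ be the Laplace transform of a waiting time density satisfying φ̃(s) = 1 - a(s) s^β + o(a(s) s^β) as s → 0+, where 0 < β ≤ 1 and a is slowly varying at 0. Set ε(δ) = a(δ) δ^β. Then for every fixed s > 0, lim_{δ→0+} ε(δ) φ̃(δs) / (1 - (1-ε(δ)) φ̃(δs)) = 1/(1+s^β). -/

import Mathlib

open Filter Asymptotics

/-- If `g` is eventually bounded near `0⁺` and satisfies an eventual halving
contraction `g (y/2) ≤ q * g y` with `0 ≤ q < 1`, and `g ≥ 0`, then `g → 0`. -/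
lemma aux_tendsto_zero (g : ℝ → ℝ) (C q : ℝ) (hC : 0 < C) (hq0 : 0 ≤ q) (hq1 : q < 1)
    (hg0 : ∀ y > (0:ℝ), 0 ≤ g y)
    (hev : ∀ᶠ y in nhdsWithin (0:ℝ) (Set.Ioi 0), g (2⁻¹ * y) ≤ q * g y ∧ g y ≤ C) :
    Tendsto g (nhdsWithin 0 (Set.Ioi 0)) (nhds 0) := by
  obtain ⟨u, hu, hsub⟩ := (mem_nhdsGT_iff_exists_Ioc_subset).1 hev
  have hu0 : (0:ℝ) < u := hu
  -- induction: on (0, u * (1/2)^n], g ≤ C * q^n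
  have key : ∀ n : ℕ, ∀ z : ℝ, 0 < z → z ≤ u * (2⁻¹:ℝ) ^ n → g z ≤ C * q ^ n := by
    intro n
    induction n with
    | zero =>
      intro z hz hzu
      simpa using (hsub ⟨hz, by simpa using hzu⟩).2
    | succ n ih =>
      intro z hz hzu
      have h2z : (0:ℝ) < 2 * z := by linarith
      have h2zu : 2 * z ≤ u * (2⁻¹:ℝ) ^ n := by
        have : z ≤ u * (2⁻¹:ℝ) ^ n * 2⁻¹ := by
          calc z ≤ u * (2⁻¹:ℝ) ^ (n+1) := hzu
          _ = u * (2⁻¹:ℝ) ^ n * 2⁻¹ := by ring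
        linarith
      have h2zu' : 2 * z ≤ u := by
        have hpow : (2⁻¹:ℝ) ^ n ≤ 1 := by
          apply pow_le_one₀ <;> norm_num
        nlinarith
      have h1 : g (2⁻¹ * (2 * z)) ≤ q * g (2 * z) := (hsub ⟨h2z, h2zu'⟩).1
      have h2 : g (2 * z) ≤ C * q ^ n := ih (2 * z) h2z h2zu
      have hz' : (2⁻¹:ℝ) * (2 * z) = z := by ring
      rw [hz'] at h1
      calc g z ≤ q * g (2 * z) := h1
      _ ≤ q * (C * q ^ n) := by
          apply mul_le_mul_of_nonneg_left h2 hq0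
      _ = C * q ^ (n + 1) := by ring
  rw [NormedAddCommGroup.tendsto_nhds_zero]
  intro ε hε
  obtain ⟨n, hn⟩ : ∃ n : ℕ, C * q ^ n < ε := by
    have := (tendsto_pow_atTop_nhds_zero_of_lt_one hq0 hq1).const_mul C
    rw [mul_zero] at this
    have := (this.eventually (eventually_lt_nhds hε)).exists
    exact this
  have hmem : Set.Ioc (0:ℝ) (u * (2⁻¹:ℝ)^n) ∈ nhdsWithin (0:ℝ) (Set.Ioi 0) := by
    apply Ioc_mem_nhdsGT_of_mem
    constructor
    · exact le_refl 0
    · positivity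
  filter_upwards [hmem] with z hz
  have := key n z hz.1 hz.2
  have h0 := hg0 z hz.1
  rw [Real.norm_eq_abs, abs_of_nonneg h0]
  exact lt_of_le_of_lt this hn

/-- Thinning limit theorem of Gnedenko–Kovalenko type: if the Laplace transform
`φ̃` of a waiting-time density satisfies `φ̃(s) = 1 - a(s)s^β + o(a(s)s^β)` as
`s → 0+` with `a` slowly varying at `0` and `0 < β ≤ 1`, then with
`ε(δ) = a(δ)δ^β`, for every fixed `s > 0`,
`ε(δ) φ̃(δs) / (1 - (1-ε(δ)) φ̃(δs)) → 1/(1+s^β)` as `δ → 0+`. -/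
theorem thinning_limit (β : ℝ) (hβ0 : 0 < β) (hβ1 : β ≤ 1)
    (a : ℝ → ℝ) (ha_pos : ∀ y > (0:ℝ), 0 < a y)
    (ha_slow : ∀ c > (0:ℝ),
      Tendsto (fun y => a (c * y) / a y) (nhdsWithin 0 (Set.Ioi 0)) (nhds 1))
    (phiT : ℝ → ℝ) (hphi : ∀ s > (0:ℝ), 0 < phiT s ∧ phiT s ≤ 1)
    (hasymp : (fun s => phiT s - (1 - a s * s ^ β))
      =o[nhdsWithin 0 (Set.Ioi 0)] (fun s => a s * s ^ β)) :
    ∀ s > (0:ℝ),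
      Tendsto
        (fun δ : ℝ =>
          (a δ * δ ^ β) * phiT (δ * s) / (1 - (1 - a δ * δ ^ β) * phiT (δ * s)))
        (nhdsWithin 0 (Set.Ioi 0)) (nhds (1 / (1 + s ^ β))) := by
  intro s hs
  set L := nhdsWithin (0:ℝ) (Set.Ioi 0) with hL
  set g : ℝ → ℝ := fun y => a y * y ^ β with hg
  have hg_pos : ∀ y > (0:ℝ), 0 < g y := fun y hy =>
    mul_pos (ha_pos y hy) (Real.rpow_pos_of_pos hy β)
  -- r : the little-o remainder ratio
  have hr : Tendsto (fun y => (phiT y - (1 - g y)) / g y) L (nhds 0) :=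
    hasymp.tendsto_div_nhds_zero
  set r : ℝ → ℝ := fun y => (phiT y - (1 - g y)) / g y with hrdef
  have hphi_eq : ∀ y > (0:ℝ), phiT y = 1 - g y + r y * g y := by
    intro y hy
    have : r y * g y = phiT y - (1 - g y) := by
      rw [hrdef]
      exact div_mul_cancel₀ _ (hg_pos y hy).ne'
    linarith
  -- Step 1: g is eventually ≤ 2
  have hbound : ∀ᶠ y in L, g y ≤ 2 := by
    have h12 : ∀ᶠ y in L, |phiT y - (1 - g y)| ≤ (1/2) * g y := by
      have := hasymp.def (by norm_num : (0:ℝ) < 1/2)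
      filter_upwards [this, self_mem_nhdsWithin] with y h hy
      have : |g y| = g y := abs_of_pos (hg_pos y hy)
      rw [Real.norm_eq_abs, Real.norm_eq_abs, this] at h
      exact h
    filter_upwards [h12, self_mem_nhdsWithin] with y h hy
    have h1 : phiT y - (1 - g y) ≤ (1/2) * g y := le_of_abs_le h
    have h2 : 0 < phiT y := (hphi y hy).1
    linarith
  -- Step 2: g → 0
  have hg0 : Tendsto g L (nhds 0) := by
    set q : ℝ := ((2:ℝ)⁻¹ ^ β + 1) / 2 with hqdef
    have hhalf : (0:ℝ) < (2:ℝ)⁻¹ ^ β := Real.rpow_pos_of_pos (by norm_num) β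
    have hhalf1 : (2:ℝ)⁻¹ ^ β < 1 := by
      apply Real.rpow_lt_one (by norm_num) (by norm_num) hβ0
    have hq0 : 0 ≤ q := by rw [hqdef]; linarith
    have hq1 : q < 1 := by rw [hqdef]; linarith
    have hqgt : (2:ℝ)⁻¹ ^ β < q := by rw [hqdef]; linarith
    apply aux_tendsto_zero g 2 q (by norm_num) hq0 hq1 (fun y hy => (hg_pos y hy).le)
    have hslow := ha_slow (2⁻¹ : ℝ) (by norm_num)
    -- eventually a(y/2)/a(y) < q * 2^β  (note q * 2^β > 1)
    have hlt : (1:ℝ) < q / (2:ℝ)⁻¹ ^ β := by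
      rw [lt_div_iff₀ hhalf]; linarith
    have hevratio : ∀ᶠ y in L, a (2⁻¹ * y) / a y < q / (2:ℝ)⁻¹ ^ β :=
      hslow.eventually (eventually_lt_nhds hlt)
    filter_upwards [hevratio, hbound, self_mem_nhdsWithin] with y hry hby hy
    refine ⟨?_, hby⟩
    have hy0 : (0:ℝ) < y := hy
    have hay : 0 < a y := ha_pos y hy0
    have hrw : g (2⁻¹ * y) = (a (2⁻¹ * y) / a y) * (2⁻¹:ℝ) ^ β * g y := by
      simp only [hg]
      have : ((2:ℝ)⁻¹ * y) ^ β = (2⁻¹:ℝ) ^ β * y ^ β :=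
        Real.mul_rpow (by norm_num) hy0.le
      rw [this]
      field_simp
    rw [hrw]
    have hgy : 0 < g y := hg_pos y hy0
    have h1 : a (2⁻¹ * y) / a y * (2⁻¹:ℝ) ^ β ≤ q := by
      have := hry.le
      calc a (2⁻¹ * y) / a y * (2⁻¹:ℝ) ^ β
          ≤ (q / (2:ℝ)⁻¹ ^ β) * (2⁻¹:ℝ) ^ β := by
            apply mul_le_mul_of_nonneg_right this hhalf.le
      _ = q := by field_simp
    exact mul_le_mul_of_nonneg_right h1 hgy.le
  -- the map δ ↦ δ * s sends L to L
  have hmul : Tendsto (fun δ : ℝ => δ * s) L L := by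
    rw [hL, tendsto_nhdsWithin_iff]
    constructor
    · have : Tendsto (fun δ : ℝ => δ * s) (nhds 0) (nhds (0 * s)) :=
        (continuous_id.mul continuous_const).tendsto 0
      rw [zero_mul] at this
      exact this.mono_left nhdsWithin_le_nhds
    · filter_upwards [self_mem_nhdsWithin] with δ hδ
      exact mul_pos hδ hs
  -- Step 3: phiT (δ * s) → 1
  have hgδs : Tendsto (fun δ => g (δ * s)) L (nhds 0) := hg0.comp hmul
  have hrδs : Tendsto (fun δ => r (δ * s)) L (nhds 0) := hr.comp hmul
  have hphi1 : Tendsto (fun δ => phiT (δ * s)) L (nhds 1) := by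
    have h : Tendsto (fun δ => 1 - g (δ * s) + r (δ * s) * g (δ * s)) L (nhds 1) := by
      have hc : Tendsto (fun _ : ℝ => (1:ℝ)) L (nhds 1) := tendsto_const_nhds
      have := (hc.sub hgδs).add (hrδs.mul hgδs)
      simpa using this
    apply h.congr'
    filter_upwards [self_mem_nhdsWithin] with δ hδ
    exact (hphi_eq (δ * s) (mul_pos hδ hs)).symm
  -- Step 4: (1 - phiT(δs)) / g δ → s ^ β
  have hratio : Tendsto (fun δ => (1 - phiT (δ * s)) / g δ) L (nhds (s ^ β)) := by
    have hslow := ha_slow s hs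
    have haratio : Tendsto (fun δ => a (δ * s) / a δ) L (nhds 1) := by
      apply hslow.congr'
      filter_upwards [self_mem_nhdsWithin] with δ hδ
      rw [mul_comm]
    have h : Tendsto (fun δ => (a (δ * s) / a δ) * s ^ β * (1 - r (δ * s))) L
        (nhds (s ^ β)) := by
      have hc : Tendsto (fun _ : ℝ => (1:ℝ)) L (nhds 1) := tendsto_const_nhds
      have := (haratio.mul_const (s ^ β)).mul (hc.sub hrδs)
      simpa using this
    apply h.congr'
    filter_upwards [self_mem_nhdsWithin] with δ hδ
    have hδ0 : (0:ℝ) < δ := hδ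
    have hgδ : 0 < g δ := hg_pos δ hδ0
    have hphieq := hphi_eq (δ * s) (mul_pos hδ0 hs)
    have h1 : 1 - phiT (δ * s) = g (δ * s) * (1 - r (δ * s)) := by
      rw [hphieq]; ring
    rw [h1]
    have h2 : g (δ * s) = (a (δ * s) / a δ) * s ^ β * g δ := by
      simp only [hg]
      have : (δ * s) ^ β = δ ^ β * s ^ β := Real.mul_rpow hδ0.le hs.le
      rw [this]
      field_simp [(ha_pos δ hδ0).ne']
    rw [h2]
    conv_rhs => rw [mul_right_comm, mul_div_cancel_right₀ _ hgδ.ne']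
  -- Final assembly
  have hden_ne : s ^ β + 1 ≠ 0 := by positivity
  have hfinal : Tendsto
      (fun δ => phiT (δ * s) / ((1 - phiT (δ * s)) / g δ + phiT (δ * s))) L
      (nhds (1 / (s ^ β + 1))) := by
    have := hphi1.div (hratio.add hphi1) hden_ne
    exact this
  have : (1:ℝ) / (s ^ β + 1) = 1 / (1 + s ^ β) := by rw [add_comm]
  rw [this] at hfinal
  apply hfinal.congr'
  filter_upwards [self_mem_nhdsWithin] with δ hδ
  have hδ0 : (0:ℝ) < δ := hδ
  have hgδ : 0 < g δ := hg_pos δ hδ0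
  have hden : (1 - phiT (δ * s)) / g δ + phiT (δ * s)
      = (1 - (1 - g δ) * phiT (δ * s)) / g δ := by
    field_simp
    ring
  rw [hden, div_div_eq_mul_div, mul_comm]
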